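/- Let α be a Frenet curve in S³ with curvature κ and torsion τ such that τ(s) ≠ 0 and κ′(s) ≠ 0 for all s ∈ I. If there are a unit vector a ∈ ℝ⁴ and σ ∈ (−1,1), σ ≠ 0, with ⟨α(s),a⟩ = σ for all s ∈ I (so α lies in a geodesic sphere of S³), then for all s ∈ I: τ(s)/κ(s) − d/ds [ κ′(s)/(κ(s)²τ(s)) ] = 0. -/

import Mathlib

noncomputable section

/-- The standard Euclidean inner product on `ℝ⁴`. -/
def eprod (x y : Fin 4 → ℝ) : ℝ :=
  x 0 * y 0 + x 1 * y 1 + x 2 * y 2 + x 3 * y 3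

/-- A Frenet curve in the round sphere `S³ = {p ∈ ℝ⁴ : ⟨p,p⟩ = 1}`:
a `C⁴` unit-speed curve `α : I → S³` on an open interval `I`, together with a
Frenet frame `T, N, B`, a positive `C²` curvature `κ` and a `C¹` torsion `τ`,
such that `T(s), N(s), B(s), α(s)` is an orthonormal basis of `ℝ⁴` for each
`s ∈ I` and the Frenet equations `T′ = κN − α`, `N′ = −κT + τB`, `B′ = −τN`
hold on `I`. -/
structure FrenetCurveS3 where
  I : Set ℝ
  hopen : IsOpen I
  hconn : I.OrdConnected
  α : ℝ → Fin 4 → ℝ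
  T : ℝ → Fin 4 → ℝ
  N : ℝ → Fin 4 → ℝ
  B : ℝ → Fin 4 → ℝ
  κ : ℝ → ℝ
  τ : ℝ → ℝ
  hα_smooth : ContDiffOn ℝ 4 α I
  hκ_smooth : ContDiffOn ℝ 2 κ I
  hτ_smooth : ContDiffOn ℝ 1 τ I
  hκ_pos : ∀ s ∈ I, 0 < κ s
  h_sphere : ∀ s ∈ I, eprod (α s) (α s) = 1
  hT : ∀ s ∈ I, HasDerivAt α (T s) s
  hTT : ∀ s ∈ I, eprod (T s) (T s) = 1
  hNN : ∀ s ∈ I, eprod (N s) (N s) = 1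
  hBB : ∀ s ∈ I, eprod (B s) (B s) = 1
  hTN : ∀ s ∈ I, eprod (T s) (N s) = 0
  hTB : ∀ s ∈ I, eprod (T s) (B s) = 0
  hNB : ∀ s ∈ I, eprod (N s) (B s) = 0
  hTα : ∀ s ∈ I, eprod (T s) (α s) = 0
  hNα : ∀ s ∈ I, eprod (N s) (α s) = 0
  hBα : ∀ s ∈ I, eprod (B s) (α s) = 0
  hbasis : ∀ s ∈ I, ∀ v : Fin 4 → ℝ,
    eprod v v =
      eprod v (T s) ^ 2 + eprod v (N s) ^ 2 + eprod v (B s) ^ 2 + eprod v (α s) ^ 2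
  hFrenetT : ∀ s ∈ I, HasDerivAt T (κ s • N s - α s) s
  hFrenetN : ∀ s ∈ I, HasDerivAt N ((-κ s) • T s + τ s • B s) s
  hFrenetB : ∀ s ∈ I, HasDerivAt B ((-τ s) • N s) s


lemma eprod_hasDerivAt {f : ℝ → Fin 4 → ℝ} {f' : Fin 4 → ℝ} {s : ℝ}
    (h : HasDerivAt f f' s) (a : Fin 4 → ℝ) :
    HasDerivAt (fun u => eprod (f u) a) (eprod f' a) s := by
  have h0 := (hasDerivAt_pi.mp h 0).mul_const (a 0)
  have h1 := (hasDerivAt_pi.mp h 1).mul_const (a 1)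
  have h2 := (hasDerivAt_pi.mp h 2).mul_const (a 2)
  have h3 := (hasDerivAt_pi.mp h 3).mul_const (a 3)
  have h4 := ((h0.add h1).add h2).add h3
  exact h4

/-- If a Frenet curve `α` in `S³` with `τ ≠ 0` and `κ′ ≠ 0` is contained in a
geodesic sphere `U_{a,σ}` (`a` a unit vector, `σ ∈ (−1,1)`, `σ ≠ 0`), then
`τ/κ − (κ′/(κ²τ))′ = 0` on `I`. -/
theorem fourth_order_equation_of_contained_in_geodesic_sphere_S3
    (F : FrenetCurveS3) (a : Fin 4 → ℝ) (σ : ℝ)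
    (ha : eprod a a = 1) (hσ : σ ∈ Set.Ioo (-1 : ℝ) 1) (hσ0 : σ ≠ 0)
    (hcontained : ∀ s ∈ F.I, eprod (F.α s) a = σ)
    (hτ : ∀ s ∈ F.I, F.τ s ≠ 0) (hκ' : ∀ s ∈ F.I, deriv F.κ s ≠ 0) :
    ∀ s ∈ F.I,
      F.τ s / F.κ s
        - deriv (fun u => deriv F.κ u / (F.κ u ^ 2 * F.τ u)) s = 0 := by
  intro s hs
  have hnhds : F.I ∈ nhds s := F.hopen.mem_nhds hs
  have hκne : ∀ u ∈ F.I, F.κ u ≠ 0 := fun u hu => (F.hκ_pos u hu).ne'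
  have hκdiff : ∀ u ∈ F.I, HasDerivAt F.κ (deriv F.κ u) u := by
    intro u hu
    exact ((F.hκ_smooth.differentiableOn (by norm_num)).differentiableAt
      (F.hopen.mem_nhds hu)).hasDerivAt
  -- Step 1: ⟨T,a⟩ = 0 on I
  have step1 : ∀ u ∈ F.I, eprod (F.T u) a = 0 := by
    intro u hu
    have hd : HasDerivAt (fun v => eprod (F.α v) a) (eprod (F.T u) a) u :=
      eprod_hasDerivAt (F.hT u hu) a
    have hc : HasDerivAt (fun v => eprod (F.α v) a) 0 u := by
      have : HasDerivAt (fun _ : ℝ => σ) 0 u := hasDerivAt_const u σ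
      exact this.congr_of_eventuallyEq
        (Filter.eventually_of_mem (F.hopen.mem_nhds hu) fun v hv => hcontained v hv)
    exact hd.unique hc
  -- Step 2: ⟨N,a⟩ = σ / κ on I
  have step2 : ∀ u ∈ F.I, eprod (F.N u) a = σ / F.κ u := by
    intro u hu
    have hd : HasDerivAt (fun v => eprod (F.T v) a)
        (eprod (F.κ u • F.N u - F.α u) a) u := eprod_hasDerivAt (F.hFrenetT u hu) a
    have hc : HasDerivAt (fun v => eprod (F.T v) a) 0 u := by
      have : HasDerivAt (fun _ : ℝ => (0:ℝ)) 0 u := hasDerivAt_const u 0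
      exact this.congr_of_eventuallyEq
        (Filter.eventually_of_mem (F.hopen.mem_nhds hu) fun v hv => step1 v hv)
    have heq := hd.unique hc
    have hexp : eprod (F.κ u • F.N u - F.α u) a
        = F.κ u * eprod (F.N u) a - eprod (F.α u) a := by
      simp only [eprod, Pi.sub_apply, Pi.add_apply, Pi.smul_apply, Pi.neg_apply, smul_eq_mul]; ring
    rw [hexp, hcontained u hu] at heq
    rw [eq_div_iff (hκne u hu)]
    linarith [heq]
  -- Step 3: ⟨B,a⟩ = -σ * κ'/(κ² τ) on I
  have step3 : ∀ u ∈ F.I, eprod (F.B u) a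
      = -σ * (deriv F.κ u / (F.κ u ^ 2 * F.τ u)) := by
    intro u hu
    have hd : HasDerivAt (fun v => eprod (F.N v) a)
        (eprod ((-F.κ u) • F.T u + F.τ u • F.B u) a) u :=
      eprod_hasDerivAt (F.hFrenetN u hu) a
    have hc : HasDerivAt (fun v => eprod (F.N v) a)
        ((0 * F.κ u - σ * deriv F.κ u) / F.κ u ^ 2) u := by
      have : HasDerivAt (fun v => σ / F.κ v)
          ((0 * F.κ u - σ * deriv F.κ u) / F.κ u ^ 2) u :=
        (hasDerivAt_const u σ).div (hκdiff u hu) (hκne u hu)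
      exact this.congr_of_eventuallyEq
        (Filter.eventually_of_mem (F.hopen.mem_nhds hu) fun v hv => step2 v hv)
    have heq := hd.unique hc
    have hexp : eprod ((-F.κ u) • F.T u + F.τ u • F.B u) a
        = -F.κ u * eprod (F.T u) a + F.τ u * eprod (F.B u) a := by
      simp only [eprod, Pi.sub_apply, Pi.add_apply, Pi.smul_apply, Pi.neg_apply, smul_eq_mul]; ring
    rw [hexp, step1 u hu] at heq
    have hτu := hτ u hu
    have hκu := hκne u hu
    field_simp at heq ⊢
    linarith [heq]
  -- Step 4
  have hd : HasDerivAt (fun v => eprod (F.B v) a)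
      (eprod ((-F.τ s) • F.N s) a) s := eprod_hasDerivAt (F.hFrenetB s hs) a
  have hexp : eprod ((-F.τ s) • F.N s) a = -F.τ s * eprod (F.N s) a := by
    simp only [eprod, Pi.sub_apply, Pi.add_apply, Pi.smul_apply, Pi.neg_apply, smul_eq_mul]; ring
  have hd2 : HasDerivAt (fun v => -σ * (deriv F.κ v / (F.κ v ^ 2 * F.τ v)))
      (-F.τ s * (σ / F.κ s)) s := by
    have := hd.congr_of_eventuallyEq
      (Filter.eventually_of_mem hnhds fun v hv => (step3 v hv).symm)
    rw [hexp, step2 s hs] at this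
    exact this
  have hd3 : HasDerivAt (fun v => deriv F.κ v / (F.κ v ^ 2 * F.τ v))
      ((-σ)⁻¹ * (-F.τ s * (σ / F.κ s))) s := by
    have h := hd2.const_mul ((-σ)⁻¹)
    have hσ' : (-σ) ≠ 0 := neg_ne_zero.mpr hσ0
    have : (fun v => (-σ)⁻¹ * (-σ * (deriv F.κ v / (F.κ v ^ 2 * F.τ v))))
        = fun v => deriv F.κ v / (F.κ v ^ 2 * F.τ v) := by
      funext v; field_simp
    rwa [this] at h
  rw [hd3.deriv]
  have hκs := hκne s hs
  field_simp
  ring
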